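/- arXiv:2204.04452 — 3 statements merged into one kernel-verified Lean document; each statement's English description precedes it below -/
import Mathlib

section
/- Let W ∈ [0,1]^{n×n} be doubly stochastic and suppose there exists p ∈ [0,1] such that for every matrix M ∈ ℝ^{d×n}, ‖MW − M̄‖_F² ≤ (1−p)‖M − M̄‖_F², where M̄ = M·(1/n)𝟙𝟙ᵀ. Then ‖W − (1/n)𝟙𝟙ᵀ‖_F² ≤ (n−1)(1−p). -/
/-!
Taking `M = 1` (so `d = n`) in the contraction hypothesis turns `M W - M̄` into `W - (1/n)𝟙𝟙ᵀ`,
while `‖1 - (1/n)𝟙𝟙ᵀ‖_F² = n - 1`.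
-/

open Matrix Finset

variable {ι : Type*} [Fintype ι] [DecidableEq ι]

lemma Matrix.sum_one_apply (i : ι) : ∑ l, (1 : Matrix ι ι ℝ) i l = 1 := by
  simp [one_apply]

lemma Matrix.sum_sq_one_sub_inv_card [Nonempty ι] :
    ∑ i, ∑ j, ((1 : Matrix ι ι ℝ) i j - (Fintype.card ι : ℝ)⁻¹) ^ 2 = Fintype.card ι - 1 := by
  have hc : (Fintype.card ι : ℝ) ≠ 0 := Nat.cast_ne_zero.mpr Fintype.card_ne_zero
  -- the entries of `1` are `0` or `1`, so each square is affine in the entry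
  have hsq (i j : ι) : ((1 : Matrix ι ι ℝ) i j - (Fintype.card ι : ℝ)⁻¹) ^ 2 =
      (1 - 2 * (Fintype.card ι : ℝ)⁻¹) * (1 : Matrix ι ι ℝ) i j + (Fintype.card ι : ℝ)⁻¹ ^ 2 := by
    rw [one_apply]; split_ifs <;> ring
  simp only [hsq, sum_add_distrib, ← mul_sum, sum_one_apply, sum_const, card_univ, nsmul_eq_mul]
  field_simp
  ring

theorem stmt_4_general {n : ℕ} (hn : 0 < n) (W : Matrix (Fin n) (Fin n) ℝ)
    (p : ℝ)
    (hmix : ∀ (d : ℕ) (M : Matrix (Fin d) (Fin n) ℝ),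
      ∑ i, ∑ j, (∑ l, M i l * W l j - (n : ℝ)⁻¹ * ∑ l, M i l) ^ 2 ≤
        (1 - p) * ∑ i, ∑ j, (M i j - (n : ℝ)⁻¹ * ∑ l, M i l) ^ 2) :
    ∑ i, ∑ j, (W i j - (n : ℝ)⁻¹) ^ 2 ≤ ((n : ℝ) - 1) * (1 - p) := by
  have : Nonempty (Fin n) := Fin.pos_iff_nonempty.mp hn
  have h := hmix n 1
  simp only [← mul_apply, Matrix.one_mul, sum_one_apply, mul_one] at h
  have hone := sum_sq_one_sub_inv_card (ι := Fin n)
  rw [Fintype.card_fin] at hone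
  rwa [hone, mul_comm] at h

/-- Upper bound on the squared Frobenius distance from a mixing matrix to the uniform matrix. -/
theorem stmt_4 {n : ℕ} (hn : 0 < n) (W : Matrix (Fin n) (Fin n) ℝ)
    (hW01 : ∀ i j, W i j ∈ Set.Icc (0:ℝ) 1)
    (hrow : W.mulVec 1 = 1) (hcol : Matrix.vecMul 1 W = 1)
    (p : ℝ) (hp : p ∈ Set.Icc (0:ℝ) 1)
    (hmix : ∀ (d : ℕ) (M : Matrix (Fin d) (Fin n) ℝ),
      ∑ i, ∑ j, (∑ l, M i l * W l j - (n : ℝ)⁻¹ * ∑ l, M i l) ^ 2 ≤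
        (1 - p) * ∑ i, ∑ j, (M i j - (n : ℝ)⁻¹ * ∑ l, M i l) ^ 2) :
    ∑ i, ∑ j, (W i j - (n : ℝ)⁻¹) ^ 2 ≤ ((n : ℝ) - 1) * (1 - p) :=
  stmt_4_general hn W p hmix
end

section
/- For any r₀, b, e, d ≥ 0 and T ∈ ℕ, choosing η = min{ (r₀/(b(T+1)))^{1/2}, (r₀/(e(T+1)))^{1/3}, 1/d } gives r₀/(η(T+1)) + bη + eη² ≤ 2(b r₀/(T+1))^{1/2} + 2e^{1/3}(r₀/(T+1))^{2/3} + d r₀/(T+1). -/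
open scoped ENNReal NNReal

private lemma auxCancel (x y t : ℝ≥0∞) (ht : t ≠ 0) (ht' : t ≠ ∞) :
    x * (y / (x * t)) ≤ y / t := by
  rw [div_eq_mul_inv, ENNReal.mul_inv (Or.inr ht') (Or.inr ht)]
  calc x * (y * (x⁻¹ * t⁻¹)) = (x * x⁻¹) * (y * t⁻¹) := by ring
    _ ≤ 1 * (y * t⁻¹) := mul_le_mul_left (ENNReal.mul_inv_le_one x) _
    _ = y / t := by rw [one_mul, div_eq_mul_inv]

private lemma sqHalf (b : ℝ≥0∞) : (b ^ (2:ℕ)) ^ ((1:ℝ)/2) = b := by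
  rw [← ENNReal.rpow_natCast b 2, ← ENNReal.rpow_mul]
  norm_num

private lemma cubeThird (b : ℝ≥0∞) : (b ^ (3:ℕ)) ^ ((1:ℝ)/3) = b := by
  rw [← ENNReal.rpow_natCast b 3, ← ENNReal.rpow_mul]
  norm_num

private lemma twoThirds (b : ℝ≥0∞) : (b ^ (2:ℕ)) ^ ((1:ℝ)/3) = b ^ ((2:ℝ)/3) := by
  rw [← ENNReal.rpow_natCast b 2, ← ENNReal.rpow_mul]
  norm_num

private lemma aux3 (r b t : ℝ≥0∞) (ht : t ≠ 0) (ht' : t ≠ ∞) :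
    b * (r / (b * t)) ^ ((1:ℝ)/2) ≤ (b * r / t) ^ ((1:ℝ)/2) := by
  calc b * (r / (b*t)) ^ ((1:ℝ)/2)
      = (b^(2:ℕ)) ^ ((1:ℝ)/2) * (r/(b*t)) ^ ((1:ℝ)/2) := by rw [sqHalf]
    _ = (b^(2:ℕ) * (r/(b*t))) ^ ((1:ℝ)/2) :=
        (ENNReal.mul_rpow_of_nonneg _ _ (by norm_num)).symm
    _ ≤ (b * (r/t)) ^ ((1:ℝ)/2) := by
        refine ENNReal.rpow_le_rpow ?_ (by norm_num)
        calc b^(2:ℕ) * (r/(b*t)) = b * (b * (r/(b*t))) := by ring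
          _ ≤ b * (r/t) := mul_le_mul_right (auxCancel b r t ht ht') b
    _ = (b * r / t) ^ ((1:ℝ)/2) := by rw [mul_div_assoc]

private lemma aux4 (r e t : ℝ≥0∞) (ht : t ≠ 0) (ht' : t ≠ ∞) :
    e * ((r / (e * t)) ^ ((1:ℝ)/3)) ^ (2:ℕ) ≤ e ^ ((1:ℝ)/3) * (r / t) ^ ((2:ℝ)/3) := by
  have h1 : ((r / (e*t)) ^ ((1:ℝ)/3)) ^ (2:ℕ) = ((r/(e*t))^(2:ℕ)) ^ ((1:ℝ)/3) := by
    rw [← ENNReal.rpow_natCast _ 2, ← ENNReal.rpow_natCast _ 2, ← ENNReal.rpow_mul,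
      ← ENNReal.rpow_mul]
    ring_nf
  calc e * ((r / (e*t)) ^ ((1:ℝ)/3)) ^ (2:ℕ)
      = (e^(3:ℕ)) ^ ((1:ℝ)/3) * ((r/(e*t))^(2:ℕ)) ^ ((1:ℝ)/3) := by rw [cubeThird, h1]
    _ = (e^(3:ℕ) * (r/(e*t))^(2:ℕ)) ^ ((1:ℝ)/3) :=
        (ENNReal.mul_rpow_of_nonneg _ _ (by norm_num)).symm
    _ ≤ (e * (r/t)^(2:ℕ)) ^ ((1:ℝ)/3) := by
        refine ENNReal.rpow_le_rpow ?_ (by norm_num)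
        calc e^(3:ℕ) * (r/(e*t))^(2:ℕ) = e * (e * (r/(e*t)))^(2:ℕ) := by ring
          _ ≤ e * (r/t)^(2:ℕ) :=
              mul_le_mul_right (pow_le_pow_left' (auxCancel e r t ht ht') 2) e
    _ = e ^ ((1:ℝ)/3) * (r/t) ^ ((2:ℝ)/3) := by
        rw [ENNReal.mul_rpow_of_nonneg _ _ (by norm_num : (0:ℝ) ≤ 1/3), twoThirds]

private lemma key1 (r b t : ℝ≥0∞) (ht : t ≠ 0) (ht' : t ≠ ∞) :
    r^(2:ℕ) / ((r/(b*t)) * t^(2:ℕ)) ≤ b * r / t := by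
  rcases eq_or_ne r 0 with rfl | hr
  · simp
  rcases eq_or_ne b 0 with rfl | hb
  · rw [zero_mul, ENNReal.div_zero hr, ENNReal.top_mul (pow_ne_zero 2 ht), ENNReal.div_top]
    exact zero_le
  rcases eq_or_ne r ∞ with rfl | hr'
  · rw [ENNReal.mul_top hb, ENNReal.top_div_of_ne_top ht']
    exact le_top
  rcases eq_or_ne b ∞ with rfl | hb'
  · rw [ENNReal.top_mul hr, ENNReal.top_div_of_ne_top ht']
    exact le_top
  lift r to ℝ≥0 using hr'
  lift b to ℝ≥0 using hb'
  lift t to ℝ≥0 using ht'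
  have hb0 : b ≠ 0 := by exact_mod_cast hb
  have ht0 : t ≠ 0 := by exact_mod_cast ht
  have hr0 : r ≠ 0 := by exact_mod_cast hr
  have hbt0 : b * t ≠ 0 := mul_ne_zero hb0 ht0
  have hden : r / (b * t) * t^(2:ℕ) ≠ 0 := by positivity
  rw [← ENNReal.coe_mul, ← ENNReal.coe_div hbt0, ← ENNReal.coe_pow, ← ENNReal.coe_pow,
    ← ENNReal.coe_mul, ← ENNReal.coe_div hden, ← ENNReal.coe_mul, ← ENNReal.coe_div ht0,
    ENNReal.coe_le_coe]
  refine le_of_eq ?_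
  field_simp

private lemma key2 (r e t : ℝ≥0∞) (ht : t ≠ 0) (ht' : t ≠ ∞) :
    r^(3:ℕ) / ((r/(e*t)) * t^(3:ℕ)) ≤ e * (r/t)^(2:ℕ) := by
  rcases eq_or_ne r 0 with rfl | hr
  · simp
  rcases eq_or_ne e 0 with rfl | he
  · rw [zero_mul, ENNReal.div_zero hr, ENNReal.top_mul (pow_ne_zero 3 ht), ENNReal.div_top]
    exact zero_le
  rcases eq_or_ne r ∞ with rfl | hr'
  · rw [ENNReal.top_div_of_ne_top ht', pow_two, ENNReal.top_mul_top, ENNReal.mul_top he]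
    exact le_top
  rcases eq_or_ne e ∞ with rfl | he'
  · have hrt : (r/t)^(2:ℕ) ≠ 0 :=
      pow_ne_zero _ (ENNReal.div_ne_zero.mpr ⟨hr, ht'⟩)
    rw [ENNReal.top_mul hrt]
    exact le_top
  lift r to ℝ≥0 using hr'
  lift e to ℝ≥0 using he'
  lift t to ℝ≥0 using ht'
  have he0 : e ≠ 0 := by exact_mod_cast he
  have ht0 : t ≠ 0 := by exact_mod_cast ht
  have hr0 : r ≠ 0 := by exact_mod_cast hr
  have het0 : e * t ≠ 0 := mul_ne_zero he0 ht0
  have hden : r / (e * t) * t^(3:ℕ) ≠ 0 := by positivity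
  rw [← ENNReal.coe_mul, ← ENNReal.coe_div het0, ← ENNReal.coe_pow, ← ENNReal.coe_pow,
    ← ENNReal.coe_mul, ← ENNReal.coe_div hden, ← ENNReal.coe_div ht0, ← ENNReal.coe_pow,
    ← ENNReal.coe_mul, ENNReal.coe_le_coe]
  refine le_of_eq ?_
  field_simp

private lemma aux1 (r b t : ℝ≥0∞) (ht : t ≠ 0) (ht' : t ≠ ∞) :
    r / ((r / (b * t)) ^ ((1:ℝ)/2) * t) ≤ (b * r / t) ^ ((1:ℝ)/2) := by
  have hA2 : ((r / (b*t)) ^ ((1:ℝ)/2)) ^ (2:ℕ) = r/(b*t) := by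
    rw [← ENNReal.rpow_natCast _ 2, ← ENNReal.rpow_mul]
    norm_num
  have hsq : (r / ((r / (b*t)) ^ ((1:ℝ)/2) * t))^(2:ℕ)
      = r^(2:ℕ) / ((r/(b*t)) * t^(2:ℕ)) := by
    rw [div_eq_mul_inv, mul_pow, ← ENNReal.inv_pow, mul_pow, hA2, ← div_eq_mul_inv]
  calc r / ((r / (b*t)) ^ ((1:ℝ)/2) * t)
      = ((r / ((r / (b*t)) ^ ((1:ℝ)/2) * t))^(2:ℕ)) ^ ((1:ℝ)/2) := (sqHalf _).symm
    _ = (r^(2:ℕ) / ((r/(b*t)) * t^(2:ℕ))) ^ ((1:ℝ)/2) := by rw [hsq]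
    _ ≤ (b * r / t) ^ ((1:ℝ)/2) :=
        ENNReal.rpow_le_rpow (key1 r b t ht ht') (by norm_num)

private lemma aux2 (r e t : ℝ≥0∞) (ht : t ≠ 0) (ht' : t ≠ ∞) :
    r / ((r / (e * t)) ^ ((1:ℝ)/3) * t) ≤ e ^ ((1:ℝ)/3) * (r / t) ^ ((2:ℝ)/3) := by
  have hB3 : ((r / (e*t)) ^ ((1:ℝ)/3)) ^ (3:ℕ) = r/(e*t) := by
    rw [← ENNReal.rpow_natCast _ 3, ← ENNReal.rpow_mul]
    norm_num
  have hcube : (r / ((r / (e*t)) ^ ((1:ℝ)/3) * t))^(3:ℕ)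
      = r^(3:ℕ) / ((r/(e*t)) * t^(3:ℕ)) := by
    rw [div_eq_mul_inv, mul_pow, ← ENNReal.inv_pow, mul_pow, hB3, ← div_eq_mul_inv]
  calc r / ((r / (e*t)) ^ ((1:ℝ)/3) * t)
      = ((r / ((r / (e*t)) ^ ((1:ℝ)/3) * t))^(3:ℕ)) ^ ((1:ℝ)/3) := (cubeThird _).symm
    _ = (r^(3:ℕ) / ((r/(e*t)) * t^(3:ℕ))) ^ ((1:ℝ)/3) := by rw [hcube]
    _ ≤ (e * (r/t)^(2:ℕ)) ^ ((1:ℝ)/3) :=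
        ENNReal.rpow_le_rpow (key2 r e t ht ht') (by norm_num)
    _ = e ^ ((1:ℝ)/3) * (r/t) ^ ((2:ℝ)/3) := by
        rw [ENNReal.mul_rpow_of_nonneg _ _ (by norm_num : (0:ℝ) ≤ 1/3), twoThirds]

private lemma aux5 (r d t : ℝ≥0∞) (ht : t ≠ 0) (ht' : t ≠ ∞) :
    r / (1/d * t) ≤ d * r / t := by
  rw [one_div, div_eq_mul_inv, ENNReal.mul_inv (Or.inr ht') (Or.inr ht), inv_inv,
    div_eq_mul_inv]
  exact le_of_eq (by ring)

/-- Stepsize tuning lemma (Lemma 15 of Koloskova et al. 2020), stated in `ℝ≥0∞` so that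
the convention "candidates with zero denominator are `+∞` and hence dropped from the
minimum" is built in (`x / 0 = ∞` for `x ≠ 0` in `ℝ≥0∞`). -/
theorem stmt_14 (r₀ b e d : ℝ≥0∞) (T : ℕ)
    (η : ℝ≥0∞)
    (hη : η = min (min ((r₀ / (b * ((T : ℝ≥0∞) + 1))) ^ ((1:ℝ)/2))
        ((r₀ / (e * ((T : ℝ≥0∞) + 1))) ^ ((1:ℝ)/3))) (1 / d)) :
    r₀ / (η * ((T : ℝ≥0∞) + 1)) + b * η + e * η ^ 2 ≤
      2 * (b * r₀ / ((T : ℝ≥0∞) + 1)) ^ ((1:ℝ)/2) +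
        2 * e ^ ((1:ℝ)/3) * (r₀ / ((T : ℝ≥0∞) + 1)) ^ ((2:ℝ)/3) +
        d * r₀ / ((T : ℝ≥0∞) + 1) := by
  set t : ℝ≥0∞ := (T : ℝ≥0∞) + 1 with htdef
  have ht : t ≠ 0 := by simp [htdef]
  have ht' : t ≠ ∞ := by
    simp [htdef, ENNReal.add_eq_top]
  set A := (r₀ / (b * t)) ^ ((1:ℝ)/2) with hA
  set B := (r₀ / (e * t)) ^ ((1:ℝ)/3) with hB
  set S1 := (b * r₀ / t) ^ ((1:ℝ)/2) with hS1
  set S2 := e ^ ((1:ℝ)/3) * (r₀ / t) ^ ((2:ℝ)/3) with hS2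
  set S3 := d * r₀ / t with hS3
  have hηA : η ≤ A := hη ▸ (min_le_left _ _).trans (min_le_left _ _)
  have hηB : η ≤ B := hη ▸ (min_le_left _ _).trans (min_le_right _ _)
  have h1 : r₀ / (η * t) ≤ S1 + S2 + S3 := by
    rcases min_cases (min A B) (1/d) with ⟨h, -⟩ | ⟨h, -⟩
    · rcases min_cases A B with ⟨h2, -⟩ | ⟨h2, -⟩
      · rw [hη, h, h2, hA]
        exact le_add_right (le_add_right (aux1 r₀ b t ht ht'))
      · rw [hη, h, h2, hB]
        exact le_add_right ((aux2 r₀ e t ht ht').trans le_add_self)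
    · rw [hη, h]
      exact (aux5 r₀ d t ht ht').trans le_add_self
  have h2 : b * η ≤ S1 :=
    (mul_le_mul_right hηA b).trans (aux3 r₀ b t ht ht')
  have h3 : e * η ^ 2 ≤ S2 :=
    (mul_le_mul_right (pow_le_pow_left' hηB 2) e).trans (aux4 r₀ e t ht ht')
  calc r₀ / (η * t) + b * η + e * η ^ 2
      ≤ (S1 + S2 + S3) + S1 + S2 := add_le_add (add_le_add h1 h2) h3
    _ = 2 * S1 + 2 * S2 + S3 := by ring
    _ = 2 * S1 + 2 * e ^ ((1:ℝ)/3) * (r₀ / t) ^ ((2:ℝ)/3) + S3 := by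
        rw [hS2, mul_assoc]
end

section
/- Let g : ℝ^{n×n} → ℝ be given by g(W) = (1/n)‖WΠ − (1/n)𝟙𝟙ᵀΠ‖_F² + (λ/n)‖W − (1/n)𝟙𝟙ᵀ‖_F² with Π ∈ [0,1]^{n×K} row-stochastic and λ ≥ 0. Then for any two doubly stochastic matrices W, P, ‖∇g(W) − ∇g(P)‖_* ≤ 2(λ + (1/n)‖∑ₖ(Π_{:,k} − mean(Π_{:,k})𝟙)Π_{:,k}ᵀ‖_*)·‖W − P‖₂, where ∇g(W) = (2/n)∑ₖ(WΠ_{:,k} − mean(Π_{:,k})𝟙)Π_{:,k}ᵀ + (2λ/n)(W − (1/n)𝟙𝟙ᵀ). -/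
open Matrix

/-- The nuclear norm of a real matrix: the sum of its singular values. -/
noncomputable def nuclearNorm {m k : ℕ} (A : Matrix (Fin m) (Fin k) ℝ) : ℝ :=
  ∑ i, Real.sqrt ((Matrix.isHermitian_conjTranspose_mul_self A).eigenvalues i)

/-- The `ℓ₂ → ℓ₂` operator norm (largest singular value) of a real matrix. -/
noncomputable def l2OpNorm {m k : ℕ} (A : Matrix (Fin m) (Fin k) ℝ) : ℝ :=
  ‖(Matrix.toEuclideanLin A).toContinuousLinearMap‖

/-!
Because `W` and `P` have the same row sums, `(W - P) 𝟙 = 0` kills the centring terms, so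
`∇g(W) - ∇g(P) = (2/n) (W - P) M + (2λ/n) (W - P)`, where `M` is the centred matrix in the bound.
The estimate then follows from `‖AB‖_* ≤ ‖A‖₂ ‖B‖_*` and `‖A‖_* ≤ ‖A‖₂ ‖I‖_* = n ‖A‖₂`.

Both nuclear-norm facts come from the duality `‖A‖_* = max {tr (Aᵀ X) : ‖X‖₂ ≤ 1}`. If the columns
`vⱼ` of `V` are an orthonormal eigenbasis of `AᵀA`, then `‖A vⱼ‖ = σⱼ` and
`tr (Aᵀ X) = ∑ⱼ ⟪A vⱼ, X vⱼ⟫ ≤ ∑ⱼ σⱼ ‖X‖₂`, with equality for the polar factor `X = A V Σ⁻¹ Vᵀ`.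
-/

open WithLp
open scoped Matrix.Norms.L2Operator

section Columns

variable {ι κ ν : Type*}

lemma norm_toLp_col_sq [Fintype ι] (B : Matrix ι κ ℝ) (j : κ) :
    ‖toLp 2 (B.col j)‖ ^ 2 = (Bᴴ * B) j j := by
  rw [EuclideanSpace.real_norm_sq_eq, mul_apply]
  simp [sq]

lemma trace_conjTranspose_mul_le [Fintype ι] [Fintype κ] (B Y : Matrix ι κ ℝ) :
    trace (Bᴴ * Y) ≤ ∑ j, ‖toLp 2 (B.col j)‖ * ‖toLp 2 (Y.col j)‖ := by
  refine Finset.sum_le_sum fun j _ => (le_of_eq ?_).trans (real_inner_le_norm _ _)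
  simp [EuclideanSpace.inner_toLp_toLp, mul_apply, dotProduct, mul_comm]

lemma trace_conjTranspose_mul_mul_of_mul_conjTranspose_eq_one [Fintype ι] [Fintype κ]
    [DecidableEq κ] {V : Matrix κ κ ℝ} (hV : V * Vᴴ = 1) (A X : Matrix ι κ ℝ) :
    trace ((A * V)ᴴ * (X * V)) = trace (Aᴴ * X) := calc
  _ = trace (Vᴴ * (Aᴴ * X * V)) := by simp only [conjTranspose_mul, Matrix.mul_assoc]
  _ = trace (Aᴴ * X * V * Vᴴ) := trace_mul_comm _ _
  _ = trace (Aᴴ * X) := by rw [Matrix.mul_assoc _ V, hV, Matrix.mul_one]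

lemma norm_toLp_col_mul_le [Fintype ι] [Fintype κ] [DecidableEq κ] (X : Matrix ι κ ℝ)
    (V : Matrix κ ν ℝ) (j : ν) :
    ‖toLp 2 ((X * V).col j)‖ ≤ ‖X‖ * ‖toLp 2 (V.col j)‖ :=
  l2_opNorm_mulVec X (toLp 2 (V.col j))

lemma norm_toLp_col_eq_one [Fintype ι] [DecidableEq κ] {V : Matrix ι κ ℝ} (hV : Vᴴ * V = 1)
    (j : κ) :
    ‖toLp 2 (V.col j)‖ = 1 := by
  have h := norm_toLp_col_sq V j
  rw [hV, one_apply_eq] at h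
  exact (pow_eq_one_iff_of_nonneg (norm_nonneg _) two_ne_zero).mp h

lemma l2_opNorm_le_one_of_conjTranspose_mul_self_eq_diagonal [Fintype ι] [Fintype κ]
    [DecidableEq κ] {B : Matrix ι κ ℝ} {e : κ → ℝ} (hB : Bᴴ * B = diagonal e)
    (he : ∀ j, |e j| ≤ 1) : ‖B‖ ≤ 1 := by
  have h : ‖B‖ * ‖B‖ ≤ 1 := by
    rw [← l2_opNorm_conjTranspose_mul_self, hB, l2_opNorm_diagonal]
    exact pi_norm_le_iff_of_nonneg zero_le_one |>.mpr he
  nlinarith [norm_nonneg B]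

end Columns

variable {m k p : ℕ}

lemma l2OpNorm_eq_norm (A : Matrix (Fin m) (Fin k) ℝ) : l2OpNorm A = ‖A‖ := rfl

noncomputable def rightSingularVectors (A : Matrix (Fin m) (Fin k) ℝ) : Matrix (Fin k) (Fin k) ℝ :=
  (isHermitian_conjTranspose_mul_self A).eigenvectorUnitary

lemma rightSingularVectors_conjTranspose_mul_self (A : Matrix (Fin m) (Fin k) ℝ) :
    (rightSingularVectors A)ᴴ * rightSingularVectors A = 1 :=
  mem_unitaryGroup_iff'.mp (isHermitian_conjTranspose_mul_self A).eigenvectorUnitary.2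

lemma rightSingularVectors_mul_conjTranspose_self (A : Matrix (Fin m) (Fin k) ℝ) :
    rightSingularVectors A * (rightSingularVectors A)ᴴ = 1 :=
  mem_unitaryGroup_iff.mp (isHermitian_conjTranspose_mul_self A).eigenvectorUnitary.2

lemma conjTranspose_mul_self_mul_rightSingularVectors (A : Matrix (Fin m) (Fin k) ℝ) :
    (A * rightSingularVectors A)ᴴ * (A * rightSingularVectors A) =
      diagonal (isHermitian_conjTranspose_mul_self A).eigenvalues := by
  have h := (isHermitian_conjTranspose_mul_self A).conjStarAlgAut_star_eigenvectorUnitary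
  rw [Unitary.conjStarAlgAut_star_apply, RCLike.ofReal_real_eq_id, Function.id_comp] at h
  rw [← h, conjTranspose_mul, rightSingularVectors, star_eq_conjTranspose]
  simp only [Matrix.mul_assoc]

lemma nuclearNorm_eq_sum_norm_toLp_col (A : Matrix (Fin m) (Fin k) ℝ) :
    nuclearNorm A = ∑ j, ‖toLp 2 ((A * rightSingularVectors A).col j)‖ := by
  refine Finset.sum_congr rfl fun j _ => ?_
  rw [← Real.sqrt_sq (norm_nonneg _), norm_toLp_col_sq,
    conjTranspose_mul_self_mul_rightSingularVectors, diagonal_apply_eq]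

lemma nuclearNorm_nonneg (A : Matrix (Fin m) (Fin k) ℝ) : 0 ≤ nuclearNorm A :=
  Finset.sum_nonneg fun _ _ => Real.sqrt_nonneg _

lemma trace_conjTranspose_mul_le_nuclearNorm_mul (A X : Matrix (Fin m) (Fin k) ℝ) :
    trace (Aᴴ * X) ≤ nuclearNorm A * ‖X‖ := by
  set V := rightSingularVectors A
  rw [← trace_conjTranspose_mul_mul_of_mul_conjTranspose_eq_one
    (rightSingularVectors_mul_conjTranspose_self A), nuclearNorm_eq_sum_norm_toLp_col,
    Finset.sum_mul]
  refine (trace_conjTranspose_mul_le _ _).trans (Finset.sum_le_sum fun j _ => ?_)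
  calc ‖toLp 2 ((A * V).col j)‖ * ‖toLp 2 ((X * V).col j)‖
      ≤ ‖toLp 2 ((A * V).col j)‖ * (‖X‖ * ‖toLp 2 (V.col j)‖) := by
        gcongr; exact norm_toLp_col_mul_le X V j
    _ = ‖toLp 2 ((A * V).col j)‖ * ‖X‖ := by
        rw [norm_toLp_col_eq_one (rightSingularVectors_conjTranspose_mul_self A), mul_one]

lemma exists_l2_opNorm_le_one_trace_eq_nuclearNorm (A : Matrix (Fin m) (Fin k) ℝ) :
    ∃ X : Matrix (Fin m) (Fin k) ℝ, ‖X‖ ≤ 1 ∧ trace (Aᴴ * X) = nuclearNorm A := by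
  set V := rightSingularVectors A
  set σsq := (isHermitian_conjTranspose_mul_self A).eigenvalues
  -- `(√0)⁻¹ = 0`, so `diagonal s` is the pseudo-inverse of `Σ`
  set s : Fin k → ℝ := fun j => (√(σsq j))⁻¹
  have hAV := conjTranspose_mul_self_mul_rightSingularVectors A
  have hVV := rightSingularVectors_conjTranspose_mul_self A
  refine ⟨A * V * diagonal s * Vᴴ, ?_, ?_⟩
  · have hB : (A * V * diagonal s)ᴴ * (A * V * diagonal s) =
        diagonal fun j => s j * (σsq j * s j) := by
      rw [conjTranspose_mul, diagonal_conjTranspose, star_trivial, Matrix.mul_assoc,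
        ← Matrix.mul_assoc (A * V)ᴴ, hAV, diagonal_mul_diagonal, diagonal_mul_diagonal]
    have he : ∀ j, |s j * (σsq j * s j)| ≤ 1 := fun j => by
      have hσ : s j * (σsq j * s j) = (√(σsq j) * (√(σsq j))⁻¹) ^ 2 := by
        rw [mul_pow, Real.sq_sqrt ((posSemidef_conjTranspose_mul_self A).eigenvalues_nonneg j)]
        ring
      rw [hσ]
      rcases eq_or_ne (√(σsq j)) 0 with h | h <;> simp [h]
    have hVt : (Vᴴ)ᴴ * Vᴴ = diagonal 1 := by
      rw [conjTranspose_conjTranspose, rightSingularVectors_mul_conjTranspose_self]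
      exact diagonal_one.symm
    calc ‖A * V * diagonal s * Vᴴ‖ ≤ ‖A * V * diagonal s‖ * ‖Vᴴ‖ := l2_opNorm_mul _ _
      _ ≤ 1 * 1 := by
        gcongr
        · exact l2_opNorm_le_one_of_conjTranspose_mul_self_eq_diagonal hB he
        · exact l2_opNorm_le_one_of_conjTranspose_mul_self_eq_diagonal hVt (by simp)
      _ = 1 := one_mul 1
  · rw [← trace_conjTranspose_mul_mul_of_mul_conjTranspose_eq_one
      (rightSingularVectors_mul_conjTranspose_self A), Matrix.mul_assoc _ Vᴴ V, hVV,
      Matrix.mul_one, ← Matrix.mul_assoc, hAV, diagonal_mul_diagonal, trace_diagonal]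
    exact Finset.sum_congr rfl fun j _ => by rw [← div_eq_mul_inv, Real.div_sqrt]

lemma nuclearNorm_le_of_forall_trace_le {A : Matrix (Fin m) (Fin k) ℝ} {c : ℝ}
    (h : ∀ X : Matrix (Fin m) (Fin k) ℝ, ‖X‖ ≤ 1 → trace (Aᴴ * X) ≤ c) : nuclearNorm A ≤ c := by
  obtain ⟨X, hX, hA⟩ := exists_l2_opNorm_le_one_trace_eq_nuclearNorm A
  exact hA ▸ h X hX

lemma trace_conjTranspose_mul_le_nuclearNorm (A : Matrix (Fin m) (Fin k) ℝ)
    {X : Matrix (Fin m) (Fin k) ℝ} (hX : ‖X‖ ≤ 1) : trace (Aᴴ * X) ≤ nuclearNorm A :=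
  (trace_conjTranspose_mul_le_nuclearNorm_mul A X).trans
    (mul_le_of_le_one_right (nuclearNorm_nonneg A) hX)

lemma nuclearNorm_add_le (A B : Matrix (Fin m) (Fin k) ℝ) :
    nuclearNorm (A + B) ≤ nuclearNorm A + nuclearNorm B :=
  nuclearNorm_le_of_forall_trace_le fun X hX => by
    rw [conjTranspose_add, Matrix.add_mul, trace_add]
    exact add_le_add (trace_conjTranspose_mul_le_nuclearNorm A hX)
      (trace_conjTranspose_mul_le_nuclearNorm B hX)

lemma nuclearNorm_smul_le (c : ℝ) (A : Matrix (Fin m) (Fin k) ℝ) :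
    nuclearNorm (c • A) ≤ |c| * nuclearNorm A :=
  nuclearNorm_le_of_forall_trace_le fun X hX => by
    rw [conjTranspose_smul, star_trivial, Matrix.smul_mul, ← Matrix.mul_smul]
    calc trace (Aᴴ * c • X) ≤ nuclearNorm A * ‖c • X‖ :=
          trace_conjTranspose_mul_le_nuclearNorm_mul A _
      _ ≤ nuclearNorm A * |c| := by
        refine mul_le_mul_of_nonneg_left ?_ (nuclearNorm_nonneg A)
        rw [norm_smul, Real.norm_eq_abs]
        exact mul_le_of_le_one_right (abs_nonneg c) hX
      _ = |c| * nuclearNorm A := mul_comm _ _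

lemma nuclearNorm_mul_le (A : Matrix (Fin m) (Fin p) ℝ) (B : Matrix (Fin p) (Fin k) ℝ) :
    nuclearNorm (A * B) ≤ ‖A‖ * nuclearNorm B :=
  nuclearNorm_le_of_forall_trace_le fun X hX => by
    rw [conjTranspose_mul, Matrix.mul_assoc]
    calc trace (Bᴴ * (Aᴴ * X)) ≤ nuclearNorm B * ‖Aᴴ * X‖ :=
          trace_conjTranspose_mul_le_nuclearNorm_mul B _
      _ ≤ nuclearNorm B * ‖A‖ := by
        refine mul_le_mul_of_nonneg_left ?_ (nuclearNorm_nonneg B)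
        calc ‖Aᴴ * X‖ ≤ ‖Aᴴ‖ * ‖X‖ := l2_opNorm_mul _ _
          _ ≤ ‖A‖ := by
            rw [l2_opNorm_conjTranspose]
            exact mul_le_of_le_one_right (norm_nonneg A) hX
      _ = ‖A‖ * nuclearNorm B := mul_comm _ _

lemma nuclearNorm_one (n : ℕ) : nuclearNorm (1 : Matrix (Fin n) (Fin n) ℝ) = n := by
  rw [nuclearNorm_eq_sum_norm_toLp_col, Matrix.one_mul]
  simp [norm_toLp_col_eq_one (rightSingularVectors_conjTranspose_mul_self 1)]

lemma nuclearNorm_le_card_mul_l2_opNorm (A : Matrix (Fin m) (Fin k) ℝ) :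
    nuclearNorm A ≤ k * ‖A‖ := calc
  nuclearNorm A = nuclearNorm (A * 1) := by rw [Matrix.mul_one]
  _ ≤ ‖A‖ * nuclearNorm (1 : Matrix (Fin k) (Fin k) ℝ) := nuclearNorm_mul_le A 1
  _ = k * ‖A‖ := by rw [nuclearNorm_one, mul_comm]

lemma sum_vecMulVec_centered_sub_eq_mul {ι κ : Type*} [Fintype ι] [Fintype κ]
    {W P : Matrix ι ι ℝ} (h : W *ᵥ 1 = P *ᵥ 1) (u v : κ → ι → ℝ) (c : κ → ℝ) :
    ∑ k, vecMulVec (fun i => (W *ᵥ u k) i - c k) (v k)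
        - ∑ k, vecMulVec (fun i => (P *ᵥ u k) i - c k) (v k) =
      (W - P) * ∑ k, vecMulVec (fun i => u k i - c k) (v k) := by
  rw [Finset.mul_sum, ← Finset.sum_sub_distrib]
  refine Finset.sum_congr rfl fun k _ => ?_
  rw [← sub_vecMulVec, mul_vecMulVec]
  have hcentered : (fun i => u k i - c k) = u k - c k • 1 := by ext; simp
  rw [hcentered, mulVec_sub, mulVec_smul, sub_mulVec, sub_mulVec, h, sub_self, smul_zero,
    sub_zero]
  congr 1
  ext i
  simp only [Pi.sub_apply]
  ring

theorem stmt_18_general {n K : ℕ} (hn : 0 < n) (Pi : Matrix (Fin n) (Fin K) ℝ)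
    (lam : ℝ) (hlam : 0 ≤ lam)
    (J : Matrix (Fin n) (Fin n) ℝ)
    (gradg : Matrix (Fin n) (Fin n) ℝ → Matrix (Fin n) (Fin n) ℝ)
    (hgradg : ∀ W, gradg W =
      (2 / (n : ℝ)) • (∑ k, Matrix.vecMulVec
          (fun i => (W.mulVec fun j => Pi j k) i - (n : ℝ)⁻¹ * ∑ i', Pi i' k)
          (fun j => Pi j k))
        + ((2 * lam) / (n : ℝ)) • (W - J)) :
    ∀ W P : Matrix (Fin n) (Fin n) ℝ,
      (∀ i j, W i j ∈ Set.Icc (0:ℝ) 1) → W.mulVec 1 = 1 → Matrix.vecMul 1 W = 1 →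
      (∀ i j, P i j ∈ Set.Icc (0:ℝ) 1) → P.mulVec 1 = 1 → Matrix.vecMul 1 P = 1 →
      nuclearNorm (gradg W - gradg P) ≤
        2 * (lam + (1 / (n : ℝ)) * nuclearNorm (∑ k, Matrix.vecMulVec
            (fun i => Pi i k - (n : ℝ)⁻¹ * ∑ i', Pi i' k) (fun j => Pi j k)))
          * l2OpNorm (W - P) := by
  intro W P _ hW _ _ hP _
  set M := ∑ k, vecMulVec (fun i => Pi i k - (n : ℝ)⁻¹ * ∑ i', Pi i' k) (fun j => Pi j k)
  have hgrad : gradg W - gradg P = (2 / (n : ℝ)) • ((W - P) * M) + (2 * lam / n) • (W - P) := by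
    rw [hgradg W, hgradg P, ← sum_vecMulVec_centered_sub_eq_mul (hW.trans hP.symm)]
    module
  have hn' : (n : ℝ) ≠ 0 := by positivity
  rw [hgrad, l2OpNorm_eq_norm]
  calc nuclearNorm ((2 / (n : ℝ)) • ((W - P) * M) + (2 * lam / n) • (W - P))
      ≤ |2 / (n : ℝ)| * nuclearNorm ((W - P) * M) + |2 * lam / n| * nuclearNorm (W - P) :=
        (nuclearNorm_add_le _ _).trans
          (add_le_add (nuclearNorm_smul_le _ _) (nuclearNorm_smul_le _ _))
    _ ≤ 2 / n * (‖W - P‖ * nuclearNorm M) + 2 * lam / n * (n * ‖W - P‖) := by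
        rw [abs_of_nonneg (by positivity), abs_of_nonneg (by positivity)]
        gcongr
        · exact nuclearNorm_mul_le _ _
        · exact nuclearNorm_le_card_mul_l2_opNorm _
    _ = 2 * (lam + 1 / n * nuclearNorm M) * ‖W - P‖ := by
        field_simp
        ring

/-- Smoothness of the topology-learning objective: its gradient is Lipschitz from the
operator norm to the nuclear norm, with constant
`2(λ + (1/n)‖∑ₖ(Π₍:,k₎ − mean(Π₍:,k₎)𝟙)Π₍:,k₎ᵀ‖_*)`. -/
theorem stmt_18 {n K : ℕ} (hn : 0 < n) (Pi : Matrix (Fin n) (Fin K) ℝ)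
    (hPi01 : ∀ i k, Pi i k ∈ Set.Icc (0:ℝ) 1)
    (hPirow : ∀ i, ∑ k, Pi i k = 1)
    (lam : ℝ) (hlam : 0 ≤ lam)
    (J : Matrix (Fin n) (Fin n) ℝ) (hJ : J = (n : ℝ)⁻¹ • Matrix.of fun _ _ => (1:ℝ))
    (gradg : Matrix (Fin n) (Fin n) ℝ → Matrix (Fin n) (Fin n) ℝ)
    (hgradg : ∀ W, gradg W =
      (2 / (n : ℝ)) • (∑ k, Matrix.vecMulVec
          (fun i => (W.mulVec fun j => Pi j k) i - (n : ℝ)⁻¹ * ∑ i', Pi i' k)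
          (fun j => Pi j k))
        + ((2 * lam) / (n : ℝ)) • (W - J)) :
    ∀ W P : Matrix (Fin n) (Fin n) ℝ,
      (∀ i j, W i j ∈ Set.Icc (0:ℝ) 1) → W.mulVec 1 = 1 → Matrix.vecMul 1 W = 1 →
      (∀ i j, P i j ∈ Set.Icc (0:ℝ) 1) → P.mulVec 1 = 1 → Matrix.vecMul 1 P = 1 →
      nuclearNorm (gradg W - gradg P) ≤
        2 * (lam + (1 / (n : ℝ)) * nuclearNorm (∑ k, Matrix.vecMulVec
            (fun i => Pi i k - (n : ℝ)⁻¹ * ∑ i', Pi i' k) (fun j => Pi j k)))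
          * l2OpNorm (W - P) :=
  stmt_18_general hn Pi lam hlam J gradg hgradg
end
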